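/- The function h(c) = (1/(4c))·((√(1+32c) − √(1+16c))/(√(1+32c) + √(1+16c)))^{1/√(1+16c)}, defined for c > 0 and extended by h(0) := 1 (equal to its limit as c → 0⁺), satisfies: (i) h(1/4) = ((3−√5)/(3+√5))^{1/√5} < 1; (ii) there exists a unique c̃ ∈ (0,∞) with h'(c) > 0 for c ∈ (0,c̃) and h'(c) < 0 for c ∈ (c̃,∞); and consequently (iii) there is exactly one c₂ ∈ (0,∞) with h(c₂) = 1, and c₂ ∈ (0, 1/4). -/

import Mathlib

/-!
Write `A = √(1 + 32c)`, `B = √(1 + 16c)` and `X = (A - B)/(A + B)`, so that `log h = ℓ` with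
`ℓ c = -log (4c) + log X / B` on `(0, ∞)`. Since `X = 4c (2/(A + B))²`, the function `ℓ` agrees with
`4c log (4c) · (-4/(B(1 + B))) + (2/B) log (2/(A + B))`, which is continuous at `0` with value `0`:
this gives `h → 1`. Next `ℓ' = r / B³`, and `r' < 0` because, in the variable `s = A`, the numerator
of `r'` factors as `(s - 1)` times a sextic positive for `s ≥ 1`. As `r (1/512) > 0 > r (1/4)`, `r`
changes sign exactly once, at `c̃ ∈ (0, 1/4)`: `h` increases on `(0, c̃]` and decreases afterwards.
Because `h → 1` at `0⁺`, `h > 1` on `(0, c̃]`, and `h (1/4) < 1` then yields exactly one solution of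
`h = 1`, lying in `(c̃, 1/4)`.
-/

open Set

/-- The function h(c) from the right boundary condition (real power). -/
noncomputable def hAux (c : ℝ) : ℝ :=
  (1/(4*c)) * ((Real.sqrt (1 + 32*c) - Real.sqrt (1 + 16*c))
      / (Real.sqrt (1 + 32*c) + Real.sqrt (1 + 16*c)))
    ^ (1 / Real.sqrt (1 + 16*c))

open Filter Topology Real

theorem hasDerivAt_sqrt_one_add_mul {k c : ℝ} (h : 0 < 1 + k * c) :
    HasDerivAt (fun x => √(1 + k * x)) (k / (2 * √(1 + k * c))) c := by
  simpa using (((hasDerivAt_id c).const_mul k).const_add 1).sqrt h.ne'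

theorem lt_of_strictMonoOn_Ioc_of_tendsto {f : ℝ → ℝ} {l a L : ℝ}
    (hf : StrictMonoOn f (Ioc l a)) (hlim : Tendsto f (𝓝[>] l) (𝓝 L)) {x : ℝ}
    (hx : x ∈ Ioc l a) : L < f x := by
  have hle : ∀ y ∈ Ioc l a, L ≤ f y := fun y hy =>
    le_of_tendsto hlim <| by
      filter_upwards [Ioo_mem_nhdsGT hy.1] with z hz
      exact (hf ⟨hz.1, hz.2.le.trans hy.2⟩ hy hz.2).le
  have hmid : (l + x) / 2 ∈ Ioc l a := ⟨by linarith [hx.1], by linarith [hx.1, hx.2]⟩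
  exact (hle _ hmid).trans_lt (hf hmid hx (by linarith [hx.1]))

theorem eq_of_pos_on_Ioo_of_neg_on_Ioi {g : ℝ → ℝ} {l a b : ℝ} (hla : l ≤ a) (hlb : l ≤ b)
    (ha₁ : ∀ x ∈ Ioo l a, 0 < g x) (ha₂ : ∀ x ∈ Ioi a, g x < 0)
    (hb₁ : ∀ x ∈ Ioo l b, 0 < g x) (hb₂ : ∀ x ∈ Ioi b, g x < 0) : a = b := by
  by_contra hne
  rcases lt_or_gt_of_ne hne with h | h
  · have := ha₂ ((a + b) / 2) (by simp only [mem_Ioi]; linarith)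
    linarith [hb₁ ((a + b) / 2) ⟨by linarith, by linarith⟩]
  · have := hb₂ ((a + b) / 2) (by simp only [mem_Ioi]; linarith)
    linarith [ha₁ ((a + b) / 2) ⟨by linarith, by linarith⟩]

theorem existsUnique_eq_of_deriv_pos_of_deriv_neg {f : ℝ → ℝ} {l a b L : ℝ}
    (hf : ContinuousOn f (Ioi l)) (hpos : ∀ x ∈ Ioo l a, 0 < deriv f x)
    (hneg : ∀ x ∈ Ioi a, deriv f x < 0) (hlim : Tendsto f (𝓝[>] l) (𝓝 L))
    (hla : l < a) (hab : a < b) (hb : f b < L) :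
    (∃! x, l < x ∧ f x = L) ∧ ∀ x, l < x → f x = L → x < b := by
  have hmono : StrictMonoOn f (Ioc l a) :=
    strictMonoOn_of_deriv_pos (convex_Ioc l a) (hf.mono Ioc_subset_Ioi_self)
      (by simpa only [interior_Ioc] using hpos)
  have hanti : StrictAntiOn f (Ici a) :=
    strictAntiOn_of_deriv_neg (convex_Ici a) (hf.mono (Ici_subset_Ioi.2 hla))
      (by simpa only [interior_Ici] using hneg)
  have hgt : ∀ x ∈ Ioc l a, L < f x := fun x hx =>
    lt_of_strictMonoOn_Ioc_of_tendsto hmono hlim hx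
  have hroot_gt : ∀ x, l < x → f x = L → a < x := fun x hx hfx =>
    lt_of_not_ge fun h => (hgt x ⟨hx, h⟩).ne' hfx
  have hroot_lt : ∀ x, l < x → f x = L → x < b := fun x hx hfx =>
    lt_of_not_ge fun h => hb.not_ge <| hfx ▸
      hanti.antitoneOn hab.le (hroot_gt x hx hfx).le h
  obtain ⟨x, hx, hfx⟩ := intermediate_value_Ioo' hab.le
    (hf.mono (Icc_subset_Ioi_iff hab.le |>.2 hla)) ⟨hb, hgt a ⟨hla, le_rfl⟩⟩
  refine ⟨⟨x, ⟨hla.trans hx.1, hfx⟩, fun y ⟨hy, hfy⟩ => ?_⟩, hroot_lt⟩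
  exact hanti.injOn (hroot_gt y hy hfy).le (hroot_gt x (hla.trans hx.1) hfx).le
    (hfy.trans hfx.symm)

namespace HAux

noncomputable def A (c : ℝ) : ℝ := √(1 + 32 * c)
noncomputable def B (c : ℝ) : ℝ := √(1 + 16 * c)
noncomputable def X (c : ℝ) : ℝ := (A c - B c) / (A c + B c)

variable {c : ℝ}

theorem A_sq (hc : 0 ≤ c) : A c ^ 2 = 1 + 32 * c := sq_sqrt (by linarith)
theorem B_sq (hc : 0 ≤ c) : B c ^ 2 = 1 + 16 * c := sq_sqrt (by linarith)
theorem one_le_A (hc : 0 ≤ c) : 1 ≤ A c := one_le_sqrt.2 (by linarith)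
theorem one_le_B (hc : 0 ≤ c) : 1 ≤ B c := one_le_sqrt.2 (by linarith)
theorem A_pos (hc : 0 ≤ c) : 0 < A c := one_pos.trans_le (one_le_A hc)
theorem B_pos (hc : 0 ≤ c) : 0 < B c := one_pos.trans_le (one_le_B hc)
theorem B_le_A (hc : 0 ≤ c) : B c ≤ A c := sqrt_le_sqrt (by linarith)
theorem B_lt_A (hc : 0 < c) : B c < A c := sqrt_lt_sqrt (by linarith) (by linarith)
theorem A_le (hc : 0 ≤ c) : A c ≤ 1 + 16 * c := sqrt_le_iff.2 ⟨by linarith, by nlinarith⟩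
theorem continuous_A : Continuous A := continuous_sqrt.comp (by fun_prop)
theorem continuous_B : Continuous B := continuous_sqrt.comp (by fun_prop)

theorem X_eq (hc : 0 ≤ c) : X c = 4 * c * (2 / (A c + B c)) ^ 2 := by
  have := one_le_A hc; have := one_le_B hc
  rw [X, div_eq_iff (by positivity)]
  field_simp
  nlinarith [A_sq hc, B_sq hc]

theorem X_pos (hc : 0 < c) : 0 < X c :=
  div_pos (sub_pos.2 (B_lt_A hc)) (by linarith [one_le_A hc.le, one_le_B hc.le])

theorem X_le (hc : 0 ≤ c) : X c ≤ 4 * c := by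
  have := one_le_A hc; have := one_le_B hc
  rw [X_eq hc]
  have : (2 / (A c + B c)) ^ 2 ≤ 1 :=
    pow_le_one₀ (by positivity) ((div_le_one (by positivity)).2 (by linarith))
  nlinarith

theorem A_quarter : A (1/4) = 3 := by
  rw [A, show (1:ℝ) + 32 * (1/4) = 3 ^ 2 by norm_num, sqrt_sq (by norm_num)]

theorem B_quarter : B (1/4) = √5 := by norm_num [B]

theorem hasDerivAt_A (hc : 0 ≤ c) : HasDerivAt A (16 / A c) c := by
  refine (hasDerivAt_sqrt_one_add_mul (k := 32) (by linarith)).congr_deriv ?_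
  rw [A]; ring

theorem hasDerivAt_B (hc : 0 ≤ c) : HasDerivAt B (8 / B c) c := by
  refine (hasDerivAt_sqrt_one_add_mul (k := 16) (by linarith)).congr_deriv ?_
  rw [B]; ring

theorem hasDerivAt_log_X (hc : 0 < c) :
    HasDerivAt (fun x => log (X x)) (1 / (A c * B c * c)) c := by
  have hA := A_pos hc.le; have hB := B_pos hc.le
  have hX : HasDerivAt X _ c := ((hasDerivAt_A hc.le).sub (hasDerivAt_B hc.le)).div
    ((hasDerivAt_A hc.le).add (hasDerivAt_B hc.le)) (add_pos hA hB).ne'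
  refine (hX.log (X_pos hc).ne').congr_deriv ?_
  have := sub_pos.2 (B_lt_A hc)
  simp only [X, Pi.sub_apply]
  field_simp
  linear_combination (1 + 32 * c) * B_sq hc.le - (1 + 16 * c) * A_sq hc.le

noncomputable def ell (c : ℝ) : ℝ := -log (4 * c) + (B c)⁻¹ * log (X c)

-- `r c / 16` is the paper's `r (16 * c)`.
noncomputable def r (c : ℝ) : ℝ := B c * (1 - A c * (1 + 16 * c)) / (A c * c) - 8 * log (X c)

theorem hasDerivAt_ell (hc : 0 < c) : HasDerivAt ell (r c / B c ^ 3) c := by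
  have hA := A_pos hc.le; have hB := B_pos hc.le
  have h := (((hasDerivAt_id' c).const_mul 4).log (by positivity)).neg.add
    (((hasDerivAt_B hc.le).inv hB.ne').mul (hasDerivAt_log_X hc))
  refine h.congr_deriv ?_
  rw [r, Pi.inv_apply, ← B_sq hc.le]
  field_simp
  ring

theorem hAux_eq_exp_ell (hc : 0 < c) : hAux c = exp (ell c) := by
  rw [ell, exp_add, exp_neg, exp_log (by positivity), mul_comm (B c)⁻¹,
    ← rpow_def_of_pos (X_pos hc), hAux, one_div, one_div]
  rfl

theorem hasDerivAt_hAux (hc : 0 < c) : HasDerivAt hAux (hAux c * (r c / B c ^ 3)) c := by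
  rw [hAux_eq_exp_ell hc]
  exact (hasDerivAt_ell hc).exp.congr_of_eventuallyEq <|
    eventually_of_mem (Ioi_mem_nhds hc) fun x hx => hAux_eq_exp_ell hx

theorem hAux_pos (hc : 0 < c) : 0 < hAux c := hAux_eq_exp_ell hc ▸ exp_pos _

theorem hasDerivAt_r (hc : 0 < c) :
    HasDerivAt r (-(1 + 64 * c + 768 * c ^ 2 + A c ^ 3 * (1 + 16 * c) * (8 * c - 1)) /
      (A c ^ 3 * B c * c ^ 2)) c := by
  have hA := A_pos hc.le; have hB := B_pos hc.le
  have h := (((hasDerivAt_B hc.le).mul (((hasDerivAt_A hc.le).mul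
    (((hasDerivAt_id' c).const_mul 16).const_add 1)).const_sub 1)).div
    ((hasDerivAt_A hc.le).mul (hasDerivAt_id' c)) (mul_pos hA hc).ne').sub
    ((hasDerivAt_log_X hc).const_mul 8)
  refine h.congr_deriv ?_
  simp only [Pi.mul_apply]
  field_simp
  linear_combination (B c ^ 2 - 2 * (1 + 16 * c)) * A_sq hc.le +
    (1 + 16 * c + A c ^ 3 - 2 * A c ^ 2) * B_sq hc.le

theorem deriv_r_numerator_pos (hc : 0 < c) :
    0 < 1 + 64 * c + 768 * c ^ 2 + A c ^ 3 * (1 + 16 * c) * (8 * c - 1) := by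
  have hAc : c = (A c ^ 2 - 1) / 32 := by linarith [A_sq hc.le]
  have hA1 : 1 < A c := by nlinarith [one_le_A hc.le]
  generalize A c = s at hAc hA1 ⊢
  subst hAc
  have hP : 0 < s ^ 6 + s ^ 5 - 3 * s ^ 4 + 3 * s ^ 3 - 2 * s ^ 2 + 2 * s + 2 := by
    nlinarith [mul_pos (sub_pos.2 hA1) (sub_pos.2 hA1), pow_le_pow_left₀ zero_le_one hA1.le 3,
      pow_le_pow_left₀ zero_le_one hA1.le 4]
  nlinarith [mul_pos (sub_pos.2 hA1) hP]

theorem strictAntiOn_r : StrictAntiOn r (Ioi 0) := by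
  refine strictAntiOn_of_deriv_neg (convex_Ioi 0)
    (fun x hx => (hasDerivAt_r hx).continuousAt.continuousWithinAt) fun x hx => ?_
  rw [interior_Ioi, mem_Ioi] at hx
  have := A_pos hx.le; have := B_pos hx.le
  rw [(hasDerivAt_r hx).deriv]
  exact div_neg_of_neg_of_pos (neg_neg_of_pos (deriv_r_numerator_pos hx)) (by positivity)

theorem le_r (hc : 0 < c) : -(32 + 256 * c) - 8 * log (4 * c) ≤ r c := by
  have hA := A_pos hc.le
  have hfrac : -(32 + 256 * c) ≤ B c * (1 - A c * (1 + 16 * c)) / (A c * c) := by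
    rw [le_div_iff₀ (by positivity)]
    nlinarith [A_le hc.le, B_le_A hc.le, one_le_B hc.le, mul_pos hA hc]
  have hlog := log_le_log (X_pos hc) (X_le hc.le)
  rw [r]
  linarith

theorem r_one_div_512_pos : 0 < r (1 / 512) := by
  have h := le_r (c := 1 / 512) (by norm_num)
  rw [show (4 : ℝ) * (1 / 512) = (2 ^ 7)⁻¹ by norm_num, log_inv, log_pow] at h
  linarith [log_two_gt_d9]

theorem r_quarter_neg : r (1 / 4) < 0 := by
  have h5 : 2 ≤ √5 := le_sqrt_of_sq_le (by norm_num)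
  have h5' : √5 ^ 2 = 5 := sq_sqrt (by norm_num)
  have hX : (2 ^ 3 : ℝ)⁻¹ ≤ X (1 / 4) := by
    rw [X, A_quarter, B_quarter, le_div_iff₀ (by positivity)]
    nlinarith
  have hlog := log_le_log (by norm_num) hX
  rw [log_inv, log_pow] at hlog
  rw [r, A_quarter, B_quarter]
  have : √5 * (1 - 3 * (1 + 16 * (1 / 4))) / (3 * (1 / 4)) = -(56 / 3) * √5 := by ring
  linarith [log_two_lt_d9]

theorem exists_r_sign_change : ∃ ct ∈ Ioo (1 / 512 : ℝ) (1 / 4),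
    (∀ c ∈ Ioo 0 ct, 0 < r c) ∧ ∀ c ∈ Ioi ct, r c < 0 := by
  obtain ⟨ct, hct, hr⟩ := intermediate_value_Ioo' (by norm_num)
    (fun x hx => (hasDerivAt_r (c := x) (by linarith [hx.1])).continuousAt.continuousWithinAt)
    ⟨r_quarter_neg, r_one_div_512_pos⟩
  have hct0 : 0 < ct := by linarith [hct.1]
  refine ⟨ct, hct, fun c hc => ?_, fun c hc => ?_⟩
  · exact hr ▸ strictAntiOn_r hc.1 hct0 hc.2
  · exact hr ▸ strictAntiOn_r hct0 (hct0.trans hc) hc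

theorem deriv_hAux_pos (hc : 0 < c) (hr : 0 < r c) : 0 < deriv hAux c := by
  have := B_pos hc.le
  rw [(hasDerivAt_hAux hc).deriv]
  exact mul_pos (hAux_pos hc) (div_pos hr (by positivity))

theorem deriv_hAux_neg (hc : 0 < c) (hr : r c < 0) : deriv hAux c < 0 := by
  have := B_pos hc.le
  rw [(hasDerivAt_hAux hc).deriv]
  exact mul_neg_of_pos_of_neg (hAux_pos hc) (div_neg_of_neg_of_pos hr (by positivity))

theorem ell_eq (hc : 0 < c) :
    ell c = 4 * c * log (4 * c) * (-4 / (B c * (1 + B c))) + 2 / B c * log (2 / (A c + B c)) := by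
  have hA := A_pos hc.le; have hB := B_pos hc.le
  have hlogX : log (X c) = log (4 * c) + 2 * log (2 / (A c + B c)) := by
    rw [X_eq hc.le, log_mul (by positivity) (by positivity), log_pow, Nat.cast_ofNat]
  have hBinv : (B c)⁻¹ - 1 = 4 * c * (-4 / (B c * (1 + B c))) := by
    field_simp
    linear_combination -B_sq hc.le
  rw [ell, hlogX]
  linear_combination log (4 * c) * hBinv

theorem tendsto_ell : Tendsto ell (𝓝[>] 0) (𝓝 0) := by
  have hA : A 0 = 1 := by simp [A]
  have hB : B 0 = 1 := by simp [B]
  have hcont : ContinuousAt (fun c => 4 * c * log (4 * c) * (-4 / (B c * (1 + B c))) +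
      2 / B c * log (2 / (A c + B c))) 0 := by
    have hmul_log : Continuous fun c : ℝ => 4 * c * log (4 * c) :=
      continuous_mul_log.comp (continuous_const.mul continuous_id)
    refine (hmul_log.continuousAt.mul ?_).add (ContinuousAt.mul ?_ ?_)
    · exact continuousAt_const.div
        (continuous_B.mul (continuous_const.add continuous_B)).continuousAt (by norm_num [hB])
    · exact continuousAt_const.div continuous_B.continuousAt (by norm_num [hB])
    · exact (continuousAt_const.div (continuous_A.add continuous_B).continuousAt
        (by norm_num [hA, hB])).log (by norm_num [hA, hB])
  have h0 := hcont.tendsto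
  norm_num [hA, hB] at h0
  exact (h0.mono_left nhdsWithin_le_nhds).congr' <|
    eventually_nhdsWithin_of_forall fun c hc => (ell_eq hc).symm

theorem tendsto_hAux : Tendsto hAux (𝓝[>] 0) (𝓝 1) := by
  rw [← exp_zero]
  exact ((continuous_exp.tendsto 0).comp tendsto_ell).congr' <|
    eventually_nhdsWithin_of_forall fun c hc => (hAux_eq_exp_ell hc).symm

theorem continuousOn_hAux : ContinuousOn hAux (Ioi 0) :=
  fun _ hc => (hasDerivAt_hAux hc).continuousAt.continuousWithinAt

theorem hAux_quarter : hAux (1 / 4) = ((3 - √5) / (3 + √5)) ^ (1 / √5) := by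
  rw [hAux, show √(1 + 32 * (1 / 4)) = 3 from A_quarter,
    show √(1 + 16 * (1 / 4)) = √5 from B_quarter]
  norm_num

theorem hAux_quarter_lt_one : hAux (1 / 4) < 1 := by
  have h5 : 2 ≤ √5 := le_sqrt_of_sq_le (by norm_num)
  have h5' : √5 < 3 := (sqrt_lt' (by norm_num)).2 (by norm_num)
  rw [hAux_quarter]
  refine rpow_lt_one (div_nonneg (by linarith) (by positivity)) ?_ (by positivity)
  rw [div_lt_one (by positivity)]
  linarith

end HAux

/-- Properties of h: it tends to 1 as c → 0⁺ (so extends continuously by h(0) := 1);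
(i) h(1/4) = ((3−√5)/(3+√5))^{1/√5} < 1; (ii) there is a unique c̃ > 0 with h' > 0 on
(0,c̃) and h' < 0 on (c̃,∞); consequently (iii) there is exactly one c₂ > 0 with
h(c₂) = 1, and c₂ ∈ (0, 1/4). -/
theorem stmt17 :
    Filter.Tendsto hAux (nhdsWithin 0 (Set.Ioi 0)) (nhds 1) ∧
    (hAux (1/4) = ((3 - Real.sqrt 5)/(3 + Real.sqrt 5)) ^ (1 / Real.sqrt 5) ∧
      hAux (1/4) < 1) ∧
    (∃! ct : ℝ, 0 < ct ∧ (∀ c ∈ Set.Ioo (0:ℝ) ct, 0 < deriv hAux c) ∧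
      (∀ c ∈ Set.Ioi ct, deriv hAux c < 0)) ∧
    (∃! c₂ : ℝ, 0 < c₂ ∧ hAux c₂ = 1) ∧
    (∀ c₂ : ℝ, 0 < c₂ → hAux c₂ = 1 → c₂ < 1/4) := by
  obtain ⟨ct, hct, hr_pos, hr_neg⟩ := HAux.exists_r_sign_change
  have hct0 : 0 < ct := by linarith [hct.1]
  have hpos : ∀ c ∈ Ioo (0:ℝ) ct, 0 < deriv hAux c := fun c hc =>
    HAux.deriv_hAux_pos hc.1 (hr_pos c hc)
  have hneg : ∀ c ∈ Ioi ct, deriv hAux c < 0 := fun c hc =>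
    HAux.deriv_hAux_neg (hct0.trans hc) (hr_neg c hc)
  obtain ⟨hroot, hroot_lt⟩ := existsUnique_eq_of_deriv_pos_of_deriv_neg HAux.continuousOn_hAux
    hpos hneg HAux.tendsto_hAux hct0 hct.2 HAux.hAux_quarter_lt_one
  refine ⟨HAux.tendsto_hAux, ⟨HAux.hAux_quarter, HAux.hAux_quarter_lt_one⟩,
    ⟨ct, ⟨hct0, hpos, hneg⟩, ?_⟩, hroot, hroot_lt⟩
  rintro b ⟨hb, hb_pos, hb_neg⟩
  exact (eq_of_pos_on_Ioo_of_neg_on_Ioi hct0.le hb.le hpos hneg hb_pos hb_neg).symm
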